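/- arXiv:2011.07569 — 4 statements merged into one kernel-verified Lean document; each statement's English description precedes it below -/
import Mathlib

section
/- If M is an irreducible Metzler matrix (real square matrix with nonnegative off-diagonal entries) whose maximal real part of eigenvalues s(M) equals 0, then there exists a positive diagonal matrix P such that Mᵀ P + P M is negative semidefinite. -/
open Matrix

/-- The spectral abscissa: the largest real part among the (complex) eigenvalues. -/
noncomputable def spectralAbscissa {α : Type*} [Fintype α] [DecidableEq α]
    (M : Matrix α α ℝ) : ℝ :=
  sSup ((fun z : ℂ => z.re) '' spectrum ℂ (M.map Complex.ofReal))

/-- The spectral radius of a real matrix. -/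
noncomputable def specRad {α : Type*} [Fintype α] [DecidableEq α]
    (M : Matrix α α ℝ) : ℝ :=
  sSup ((fun z : ℂ => ‖z‖) '' spectrum ℂ (M.map Complex.ofReal))

/-- Irreducibility of a matrix: the directed graph on its nonzero entries is strongly
connected, phrased as: no nonempty proper subset of indices is closed. -/
def Irred {α : Type*} [Fintype α] [DecidableEq α] (M : Matrix α α ℝ) : Prop :=
  ∀ S : Finset α, S.Nonempty → S ≠ Finset.univ → ∃ i ∈ S, ∃ j, j ∉ S ∧ M i j ≠ 0

/-- A Metzler matrix: all off-diagonal entries are nonnegative. -/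
def Metzler {α : Type*} [Fintype α] [DecidableEq α] (M : Matrix α α ℝ) : Prop :=
  ∀ i j, i ≠ j → 0 ≤ M i j

/-!
Adding a multiple of the identity turns `M` into a nonnegative irreducible matrix `A`. Its
Perron root is the least `r` for which `A x ≤ r x` has a solution `x` in the standard simplex
(a compactness argument). At a minimizer equality holds: otherwise a power of `1 + A`, which
commutes with `A` and by irreducibility makes any nonzero nonnegative vector positive, turns `x`
into a strict subsolution and `r` could be lowered. Irreducibility also makes the eigenvector
positive. So `M` and `Mᵀ` have positive eigenvectors `v`, `u` with real eigenvalues at most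
`s(M) = 0`, i.e. `M v ≤ 0` and `Mᵀ u ≤ 0`.

For `P = diag (u / v)` and `x = v * y`, polarization `2 y_i y_j = y_i² + y_j² - (y_i - y_j)²` gives
`xᵀ (Mᵀ P + P M) x = Σ u_i y_i² (M v)_i + Σ v_j y_j² (Mᵀ u)_j - Σ u_i M_ij v_j (y_i - y_j)²`,
where the first two sums are `≤ 0` and the last one is `≥ 0` because `M` is Metzler.
-/

open Finset Filter Topology

variable {α : Type*} [Fintype α]

theorem Matrix.mulVec_nonneg {m n R : Type*} [Fintype n] [Semiring R] [PartialOrder R]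
    [IsOrderedRing R] {A : Matrix m n R} (hA : ∀ i j, 0 ≤ A i j) {w : n → R} (hw : 0 ≤ w) :
    0 ≤ A *ᵥ w :=
  fun i => sum_nonneg fun j _ => mul_nonneg (hA i j) (hw j)

section Spectrum

variable [DecidableEq α]

theorem Matrix.mem_spectrum_of_mulVec_eq_smul {K : Type*} [Field K] {M : Matrix α α K} {r : K}
    {x : α → K} (hx : x ≠ 0) (h : M *ᵥ x = r • x) : r ∈ spectrum K M := by
  rw [mem_spectrum_iff_isRoot_charpoly, Polynomial.IsRoot, eval_charpoly]
  exact exists_mulVec_eq_zero_iff.mp ⟨x, hx, by simp [sub_mulVec, h]⟩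

theorem Matrix.spectrum_transpose {K : Type*} [Field K] (M : Matrix α α K) :
    spectrum K Mᵀ = spectrum K M := by
  ext r
  simp [mem_spectrum_iff_isRoot_charpoly, charpoly_transpose]

theorem le_spectralAbscissa {M : Matrix α α ℝ} {r : ℝ} (h : r ∈ spectrum ℝ M) :
    r ≤ spectralAbscissa M := by
  have hC : (r : ℂ) ∈ spectrum ℂ (M.map Complex.ofReal) := by
    rw [mem_spectrum_iff_isRoot_charpoly] at h ⊢
    have := h.map (f := Complex.ofRealHom)
    rwa [← charpoly_map] at this
  exact le_csSup ((M.map Complex.ofReal).finite_spectrum.image _).bddAbove ⟨r, hC, rfl⟩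

theorem spectralAbscissa_transpose (M : Matrix α α ℝ) :
    spectralAbscissa Mᵀ = spectralAbscissa M := by
  rw [spectralAbscissa, spectralAbscissa, transpose_map, spectrum_transpose]

end Spectrum

section Nonneg

variable {A : Matrix α α ℝ}

def collatzWielandtSet (A : Matrix α α ℝ) : Set ℝ :=
  {r | ∃ x ∈ stdSimplex ℝ α, A *ᵥ x ≤ r • x}

theorem nonneg_of_mem_collatzWielandtSet (hA : ∀ i j, 0 ≤ A i j) {r : ℝ}
    (hr : r ∈ collatzWielandtSet A) : 0 ≤ r := by
  obtain ⟨x, ⟨hx0, hx1⟩, hAx⟩ := hr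
  obtain ⟨i, -, hi⟩ := exists_lt_of_sum_lt (f := 0) (s := univ) (g := x) (by simp [hx1])
  exact nonneg_of_mul_nonneg_left ((mulVec_nonneg hA hx0 i).trans (hAx i)) hi

theorem exists_isLeast_collatzWielandtSet [Nonempty α] (hA : ∀ i j, 0 ≤ A i j) :
    ∃ r, IsLeast (collatzWielandtSet A) r := by
  have hclosed : IsClosed (collatzWielandtSet A) := by
    have : collatzWielandtSet A =
        Prod.fst '' {p : ℝ × stdSimplex ℝ α | A *ᵥ p.2.1 ≤ p.1 • p.2.1} := by
      ext r
      simp [collatzWielandtSet]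
    rw [this]
    exact isClosedMap_fst_of_compactSpace _ (isClosed_le (by fun_prop) (by fun_prop))
  have hne : (collatzWielandtSet A).Nonempty := by
    refine ⟨∑ i, ∑ j, A i j, fun _ => (Fintype.card α : ℝ)⁻¹, ⟨fun _ => by positivity, ?_⟩,
      fun i => ?_⟩
    · simp
    · simp only [mulVec, dotProduct, Pi.smul_apply, smul_eq_mul, ← sum_mul]
      exact mul_le_mul_of_nonneg_right (single_le_sum (fun k _ => sum_nonneg fun j _ => hA k j)
        (mem_univ i)) (by positivity)
  exact ⟨_, hclosed.isLeast_csInf hne ⟨0, fun _ => nonneg_of_mem_collatzWielandtSet hA⟩⟩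

theorem exists_lt_mem_collatzWielandtSet [Nonempty α] (hA : ∀ i j, 0 ≤ A i j) {r : ℝ}
    {y : α → ℝ} (hy : 0 ≤ y) (h : ∀ i, (A *ᵥ y) i < r * y i) :
    ∃ r' < r, r' ∈ collatzWielandtSet A := by
  have hev : ∀ᶠ ε in 𝓝 (0 : ℝ), ∀ i, (A *ᵥ y) i < (r - ε) * y i :=
    eventually_all.2 fun i => (Continuous.tendsto (by fun_prop) 0).eventually
      (lt_mem_nhds (by simpa using h i))
  obtain ⟨ε, hε, hεpos⟩ : ∃ ε, (∀ i, (A *ᵥ y) i < (r - ε) * y i) ∧ 0 < ε :=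
    ((hev.filter_mono nhdsWithin_le_nhds).and (self_mem_nhdsWithin (s := Set.Ioi 0))).exists
  obtain ⟨i₀⟩ := ‹Nonempty α›
  have hsum : 0 < ∑ i, y i := by
    refine lt_of_lt_of_le ((hy i₀).lt_of_ne' fun h0 => ?_)
      (single_le_sum (fun i _ => hy i) (mem_univ i₀))
    simpa [h0] using (mulVec_nonneg hA hy i₀).trans_lt (h i₀)
  refine ⟨r - ε, by linarith, (∑ i, y i)⁻¹ • y, ⟨fun i => ?_, ?_⟩, fun i => ?_⟩
  · simpa using mul_nonneg (inv_nonneg.2 hsum.le) (hy i)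
  · simp [← mul_sum, hsum.ne']
  · simp only [mulVec_smul, Pi.smul_apply, smul_eq_mul]
    rw [mul_left_comm]
    exact mul_le_mul_of_nonneg_left (hε i).le (inv_nonneg.2 hsum.le)

section Irreducible

variable [DecidableEq α]

theorem one_add_pow_mulVec_nonneg (hA : ∀ i j, 0 ≤ A i j) {w : α → ℝ} (hw : 0 ≤ w) (k : ℕ) :
    0 ≤ (1 + A) ^ k *ᵥ w := by
  induction k with
  | zero => simpa using hw
  | succ k ih =>
    rw [pow_succ', ← mulVec_mulVec, add_mulVec, one_mulVec]
    exact add_nonneg ih (mulVec_nonneg hA ih)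

theorem Irred.exists_mulVec_pos_of_eq_zero (hirr : Irred A) (hA : ∀ i j, 0 ≤ A i j)
    {w : α → ℝ} (hw : 0 ≤ w) (hpos : ∃ i, 0 < w i) (hzero : ∃ i, w i = 0) :
    ∃ p, w p = 0 ∧ 0 < (A *ᵥ w) p := by
  set T : Finset α := {i | 0 < w i}
  have hT : T.Nonempty := by
    obtain ⟨i, hi⟩ := hpos
    exact ⟨i, by simp [T, hi]⟩
  have hTc : Tᶜ.Nonempty := by
    obtain ⟨i, hi⟩ := hzero
    exact ⟨i, by simp [T, hi]⟩
  obtain ⟨p, hp, q, hq, hApq⟩ := hirr Tᶜ hTc ((compl_ne_univ_iff_nonempty T).mpr hT)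
  have hwp : w p = 0 := le_antisymm (by simpa [T] using hp) (hw p)
  have hwq : 0 < w q := by simpa [T] using hq
  refine ⟨p, hwp, lt_of_lt_of_le ?_ (single_le_sum (fun j _ => mul_nonneg (hA p j) (hw j))
    (mem_univ q))⟩
  exact mul_pos ((hA p q).lt_of_ne' hApq) hwq

theorem Irred.exists_one_add_pow_mulVec_pos (hirr : Irred A) (hA : ∀ i j, 0 ≤ A i j)
    {w : α → ℝ} (hw : 0 ≤ w) (hw0 : w ≠ 0) : ∃ k, ∀ i, 0 < ((1 + A) ^ k *ᵥ w) i := by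
  induction hm : #{i | w i = 0} using Nat.strong_induction_on generalizing w with
  | _ m ih =>
  by_cases hzero : ∃ i, w i = 0
  · obtain ⟨i, hi⟩ := Function.ne_iff.mp hw0
    obtain ⟨p, hp0, hp⟩ :=
      hirr.exists_mulVec_pos_of_eq_zero hA hw ⟨i, (hw i).lt_of_ne' hi⟩ hzero
    set w' := w + A *ᵥ w
    have hAw := mulVec_nonneg hA hw
    have hw' : 0 ≤ w' := add_nonneg hw hAw
    have hw'p : 0 < w' p := by simpa [w', hp0] using hp
    have hlt : #{i | w' i = 0} < m := by
      rw [← hm]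
      refine card_lt_card ((ssubset_iff_of_subset fun j hj => ?_).mpr ⟨p, ?_, ?_⟩)
      · simp only [mem_filter, mem_univ, true_and, w', Pi.add_apply] at hj ⊢
        exact ((add_eq_zero_iff_of_nonneg (hw j) (hAw j)).mp hj).1
      · simpa using hp0
      · simpa using hw'p.ne'
    obtain ⟨k, hk⟩ := ih _ hlt hw' (fun h => hw'p.ne' (congrFun h p)) rfl
    exact ⟨k + 1, by rwa [pow_succ, ← mulVec_mulVec, add_mulVec, one_mulVec]⟩
  · rw [not_exists] at hzero
    exact ⟨0, fun i => by simpa using (hw i).lt_of_ne' (hzero i)⟩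

theorem Irred.exists_pos_eigenvector_of_nonneg (hirr : Irred A)
    (hA : ∀ i j, 0 ≤ A i j) : ∃ (r : ℝ) (x : α → ℝ), (∀ i, 0 < x i) ∧ A *ᵥ x = r • x := by
  cases isEmpty_or_nonempty α
  · exact ⟨0, 0, isEmptyElim, Subsingleton.elim _ _⟩
  obtain ⟨r, ⟨x, hx, hAx⟩, hmin⟩ := exists_isLeast_collatzWielandtSet hA
  have hx0 : x ≠ 0 := by
    rintro rfl
    simpa using hx.2
  have heig : A *ᵥ x = r • x := by
    by_contra hne
    set w := r • x - A *ᵥ x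
    obtain ⟨k, hk⟩ := hirr.exists_one_add_pow_mulVec_pos hA (sub_nonneg.2 hAx)
      (sub_ne_zero.2 (Ne.symm hne))
    set B := (1 + A) ^ k
    have hcomm : B * A = A * B := (((Commute.one_left A).add_left (Commute.refl A)).pow_left k).eq
    have hAy : A *ᵥ (B *ᵥ x) = r • (B *ᵥ x) - B *ᵥ w := by
      rw [mulVec_mulVec, ← hcomm, ← mulVec_mulVec, mulVec_sub, mulVec_smul, sub_sub_cancel]
    obtain ⟨r', hr', hmem⟩ := exists_lt_mem_collatzWielandtSet hA (r := r)
      (one_add_pow_mulVec_nonneg hA hx.1 k) fun i => by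
        rw [hAy, Pi.sub_apply, Pi.smul_apply, smul_eq_mul]
        linarith [hk i]
    exact (hmin hmem).not_gt hr'
  refine ⟨r, x, fun i => (hx.1 i).lt_of_ne' fun hxi => ?_, heig⟩
  obtain ⟨j, hj⟩ := Function.ne_iff.mp hx0
  obtain ⟨p, hp0, hp⟩ :=
    hirr.exists_mulVec_pos_of_eq_zero hA hx.1 ⟨j, (hx.1 j).lt_of_ne' hj⟩ ⟨i, hxi⟩
  simp [heig, hp0] at hp

end Irreducible

end Nonneg

section Metzler

variable [DecidableEq α] {M : Matrix α α ℝ}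

theorem Metzler.transpose (h : Metzler M) : Metzler Mᵀ :=
  fun i j hij => h j i hij.symm

theorem Irred.transpose (h : Irred M) : Irred Mᵀ := by
  intro S hS hSu
  obtain ⟨i, hi, j, hj, hij⟩ := h Sᶜ ((compl_ne_univ_iff_nonempty Sᶜ).mp (by rwa [compl_compl]))
    ((compl_ne_univ_iff_nonempty S).mpr hS)
  exact ⟨j, by simpa using hj, i, mem_compl.mp hi, hij⟩

theorem Irred.add_smul_one (h : Irred M) (c : ℝ) : Irred (M + c • 1) := by
  intro S hS hSu
  obtain ⟨i, hi, j, hj, hij⟩ := h S hS hSu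
  have hne : i ≠ j := by rintro rfl; exact hj hi
  exact ⟨i, hi, j, hj, by simpa [one_apply_ne hne] using hij⟩

theorem Metzler.exists_nonneg_add_smul_one (h : Metzler M) :
    ∃ c : ℝ, ∀ i j, 0 ≤ (M + c • 1) i j := by
  refine ⟨∑ k, |M k k|, fun i j => ?_⟩
  rcases eq_or_ne i j with rfl | hij
  · have := single_le_sum (fun k _ => abs_nonneg (M k k)) (mem_univ i)
    simp only [Matrix.add_apply, Matrix.smul_apply, one_apply_eq, smul_eq_mul, mul_one]
    linarith [neg_abs_le (M i i)]
  · simpa [one_apply_ne hij] using h i j hij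

theorem Metzler.exists_pos_eigenvector (h : Metzler M) (hirr : Irred M) :
    ∃ (r : ℝ) (x : α → ℝ), (∀ i, 0 < x i) ∧ M *ᵥ x = r • x := by
  obtain ⟨c, hc⟩ := h.exists_nonneg_add_smul_one
  obtain ⟨r, x, hx, hAx⟩ := (hirr.add_smul_one c).exists_pos_eigenvector_of_nonneg hc
  refine ⟨r - c, x, hx, ?_⟩
  rw [add_mulVec, smul_mulVec, one_mulVec] at hAx
  rw [sub_smul, ← hAx, add_sub_cancel_right]

theorem Metzler.exists_pos_mulVec_nonpos (h : Metzler M) (hirr : Irred M)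
    (hs : spectralAbscissa M ≤ 0) : ∃ x : α → ℝ, (∀ i, 0 < x i) ∧ M *ᵥ x ≤ 0 := by
  cases isEmpty_or_nonempty α
  · exact ⟨0, isEmptyElim, isEmptyElim⟩
  obtain ⟨r, x, hx, hMx⟩ := h.exists_pos_eigenvector hirr
  have hx0 : x ≠ 0 := fun h0 => (hx (Classical.arbitrary α)).ne' (congrFun h0 _)
  have hr : r ≤ 0 := (le_spectralAbscissa (mem_spectrum_of_mulVec_eq_smul hx0 hMx)).trans hs
  exact ⟨x, hx, hMx ▸ smul_nonpos_of_nonpos_of_nonneg hr fun i => (hx i).le⟩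

theorem Metzler.sum_mul_mul_nonpos (h : Metzler M) {u v : α → ℝ} (hu : 0 ≤ u) (hv : 0 ≤ v)
    (hMv : M *ᵥ v ≤ 0) (hMu : Mᵀ *ᵥ u ≤ 0) (y : α → ℝ) :
    ∑ i, ∑ j, u i * M i j * v j * y i * y j ≤ 0 := by
  have key : 2 * ∑ i, ∑ j, u i * M i j * v j * y i * y j =
      ∑ i, u i * y i ^ 2 * (M *ᵥ v) i + ∑ j, v j * y j ^ 2 * (Mᵀ *ᵥ u) j -
        ∑ i, ∑ j, u i * M i j * v j * (y i - y j) ^ 2 := by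
    simp only [mulVec, dotProduct, transpose_apply, mul_sum]
    rw [sum_comm (f := fun j i => v j * y j ^ 2 * (M i j * u i)), ← sum_add_distrib,
      ← sum_sub_distrib]
    refine sum_congr rfl fun i _ => ?_
    rw [← sum_add_distrib, ← sum_sub_distrib]
    exact sum_congr rfl fun j _ => by ring
  have h₁ : ∑ i, u i * y i ^ 2 * (M *ᵥ v) i ≤ 0 :=
    sum_nonpos fun i _ => mul_nonpos_of_nonneg_of_nonpos (mul_nonneg (hu i) (sq_nonneg _)) (hMv i)
  have h₂ : ∑ j, v j * y j ^ 2 * (Mᵀ *ᵥ u) j ≤ 0 :=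
    sum_nonpos fun j _ => mul_nonpos_of_nonneg_of_nonpos (mul_nonneg (hv j) (sq_nonneg _)) (hMu j)
  have h₃ : 0 ≤ ∑ i, ∑ j, u i * M i j * v j * (y i - y j) ^ 2 := by
    refine sum_nonneg fun i _ => sum_nonneg fun j _ => ?_
    rcases eq_or_ne i j with rfl | hij
    · simp
    · exact mul_nonneg (mul_nonneg (mul_nonneg (hu i) (h i j hij)) (hv j)) (sq_nonneg _)
  linarith

theorem Metzler.posSemidef_neg_transpose_mul_diagonal_add (h : Metzler M) {u v : α → ℝ}
    (hu : 0 ≤ u) (hv : ∀ i, 0 < v i) (hMv : M *ᵥ v ≤ 0) (hMu : Mᵀ *ᵥ u ≤ 0) :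
    (-(Mᵀ * diagonal (u / v) + diagonal (u / v) * M)).PosSemidef := by
  refine .of_dotProduct_mulVec_nonneg ?_ fun x => ?_
  · ext i j
    simp only [conjTranspose_apply, Matrix.neg_apply, Matrix.add_apply, mul_diagonal,
      diagonal_mul, transpose_apply, star_trivial]
    ring
  set P := u / v
  have hsubst : ∀ i j, u i * M i j * v j * (x / v) i * (x / v) j = P i * M i j * x i * x j := by
    intro i j
    simp only [P, Pi.div_apply]
    field_simp [(hv i).ne', (hv j).ne']
  have hq : star x ⬝ᵥ (-(Mᵀ * diagonal P + diagonal P * M) *ᵥ x) =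
      -(2 * ∑ i, ∑ j, u i * M i j * v j * (x / v) i * (x / v) j) := by
    simp only [hsubst, star_trivial, dotProduct, mulVec, Matrix.neg_apply, Matrix.add_apply,
      mul_diagonal, diagonal_mul, transpose_apply]
    calc ∑ i, x i * ∑ j, -(M j i * P j + P i * M i j) * x j
        = -(∑ i, ∑ j, P j * M j i * x j * x i + ∑ i, ∑ j, P i * M i j * x i * x j) := by
          simp only [mul_sum, ← sum_add_distrib, ← sum_neg_distrib]
          exact sum_congr rfl fun i _ => sum_congr rfl fun j _ => by ring
      _ = _ := by rw [sum_comm (f := fun i j => P j * M j i * x j * x i)]; ring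
  rw [hq, neg_nonneg]
  linarith [h.sum_mul_mul_nonpos hu (fun i => (hv i).le) hMv hMu (x / v)]

end Metzler

/-- If M is an irreducible Metzler matrix with spectral abscissa 0, there is a positive
diagonal matrix P with Mᵀ P + P M negative semidefinite. -/
theorem metzler_lyapunov {n : ℕ} (M : Matrix (Fin n) (Fin n) ℝ)
    (hMetz : Metzler M) (hirr : Irred M) (hs : spectralAbscissa M = 0) :
    ∃ P : Fin n → ℝ, (∀ i, 0 < P i) ∧
      (-(Mᵀ * Matrix.diagonal P + Matrix.diagonal P * M)).PosSemidef := by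
  obtain ⟨v, hv, hMv⟩ := hMetz.exists_pos_mulVec_nonpos hirr hs.le
  obtain ⟨u, hu, hMu⟩ := hMetz.transpose.exists_pos_mulVec_nonpos hirr.transpose
    (by rw [spectralAbscissa_transpose, hs])
  exact ⟨u / v, fun i => div_pos (hu i) (hv i),
    hMetz.posSemidef_neg_transpose_mul_diagonal_add (fun i => (hu i).le) hv hMv hMu⟩
end

section
/- Consider the map T : ℝ₊^{n+1} → ℝ₊^{n+1} given componentwise by Tᵢ(y) = (D_w⁻¹B_w y)ᵢ / (1 + (D_w⁻¹B_w y)ᵢ) for i ∈ [n] and T_{n+1}(y) = ((D_w⁻¹B_w y)_{n+1}(1 + y_{n+1})) / (1 + (D_w⁻¹B_w y)_{n+1}). A fixed point y of T satisfies (B_w − D_w − X(y) B_w) y = 0, i.e., is an equilibrium of the single-virus SIWS system, and conversely. -/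
/-!
Put g = D_w⁻¹B_w y ≥ 0. Then B_w y = D_w g, so the i-th component of the equilibrium equation is
δᵢ (gᵢ - yᵢ - xᵢ gᵢ), where xᵢ = yᵢ on the population nodes and x = 0 on the resource. Clearing
the positive denominator 1 + gᵢ turns the i-th fixed-point equation of T into gᵢ - yᵢ = yᵢ gᵢ on
the population nodes and into g = y on the resource, which are the same conditions.
-/

open Matrix

/-- Index type for the SIWS model: n population nodes plus the shared resource. -/
abbrev Idx (n : ℕ) := Fin n ⊕ Unit

/-- X(y) = diag(y₁,…,yₙ,0): the diagonal matrix of the population coordinates of y,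
with the resource coordinate set to zero. -/
noncomputable def Xmat {n : ℕ} (y : Idx n → ℝ) : Matrix (Idx n) (Idx n) ℝ :=
  Matrix.diagonal (Sum.elim (fun i => y (Sum.inl i)) fun _ => 0)

/-- The SIWS spread matrix B_w = [[B, b],[δ_w c, 0]]. -/
def mkBw {n : ℕ} (B : Matrix (Fin n) (Fin n) ℝ) (b c : Fin n → ℝ) (dw : ℝ) :
    Matrix (Idx n) (Idx n) ℝ :=
  Matrix.of fun i j =>
    match i, j with
    | Sum.inl i, Sum.inl j => B i j
    | Sum.inl i, Sum.inr _ => b i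
    | Sum.inr _, Sum.inl j => dw * c j
    | Sum.inr _, Sum.inr _ => 0

/-- The SIWS healing-rate matrix D_w = diag(δ₁,…,δₙ,δ_w). -/
noncomputable def mkDw {n : ℕ} (d : Fin n → ℝ) (dw : ℝ) : Matrix (Idx n) (Idx n) ℝ :=
  Matrix.diagonal (Sum.elim d fun _ => dw)

/-- Membership in the sensible domain D: every infection fraction in [0,1] and the
resource contamination nonnegative. -/
def memD {n m : ℕ} (y : Fin m → Idx n → ℝ) : Prop :=
  ∀ k, (∀ i : Fin n, y k (Sum.inl i) ∈ Set.Icc (0:ℝ) 1) ∧ 0 ≤ y k (Sum.inr ())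

section

variable {ι : Type*} [Fintype ι] [DecidableEq ι]

theorem Matrix.inv_diagonal_of_ne_zero {K : Type*} [Field K] {d : ι → K} (hd : ∀ i, d i ≠ 0) :
    (diagonal d)⁻¹ = diagonal d⁻¹ :=
  inv_eq_left_inv <| by
    rw [diagonal_mul_diagonal, ← diagonal_one]
    exact congrArg diagonal (funext fun i => inv_mul_cancel₀ (hd i))

theorem Matrix.inv_diagonal_mul_mulVec {K : Type*} [Field K] {d : ι → K} (hd : ∀ i, d i ≠ 0)
    (M : Matrix ι ι K) (y : ι → K) (i : ι) :
    (((diagonal d)⁻¹ * M) *ᵥ y) i = (M *ᵥ y) i / d i := by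
  rw [← mulVec_mulVec, inv_diagonal_of_ne_zero hd, mulVec_diagonal, Pi.inv_apply,
    inv_mul_eq_div]

omit [DecidableEq ι] in
theorem Matrix.mulVec_nonneg_s11 {R : Type*} [CommSemiring R] [PartialOrder R]
    [IsOrderedRing R] {M : Matrix ι ι R} (hM : ∀ i j, 0 ≤ M i j) {y : ι → R} (hy : 0 ≤ y)
    (i : ι) : 0 ≤ (M *ᵥ y) i :=
  dotProduct_nonneg_of_nonneg (fun j => hM i j) hy

theorem Matrix.sub_diagonal_sub_diagonal_mul_mulVec {R : Type*} [CommRing R]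
    (M : Matrix ι ι R) (d x y : ι → R) (i : ι) :
    ((M - diagonal d - diagonal x * M) *ᵥ y) i = (M *ᵥ y) i - d i * y i - x i * (M *ᵥ y) i := by
  simp only [sub_mulVec, ← mulVec_mulVec, Pi.sub_apply, mulVec_diagonal]

end

section

variable {K : Type*} [Field K] {g y : K}

theorem div_one_add_eq_iff (hg : 1 + g ≠ 0) : g / (1 + g) = y ↔ g - y = y * g := by
  rw [div_eq_iff hg, ← sub_eq_zero, ← sub_eq_zero (a := g - y)]
  ring_nf

theorem mul_one_add_div_one_add_eq_iff (hg : 1 + g ≠ 0) : g * (1 + y) / (1 + g) = y ↔ g = y := by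
  rw [div_eq_iff hg, ← sub_eq_zero, ← sub_eq_zero (a := g)]
  ring_nf

end

/-- Fixed points of the map T (written componentwise, with g = D_w⁻¹B_w y) coincide
with equilibria of the single-virus SIWS system. -/
theorem siws_fixed_point_iff_equilibrium {n : ℕ}
    (Bw : Matrix (Idx n) (Idx n) ℝ) (hBw : ∀ i j, 0 ≤ Bw i j)
    (dv : Idx n → ℝ) (hdv : ∀ i, 0 < dv i)
    (y : Idx n → ℝ) (hy : ∀ i, 0 ≤ y i)
    (g : Idx n → ℝ) (hg : g = ((Matrix.diagonal dv)⁻¹ * Bw).mulVec y) :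
    ((∀ i : Fin n, g (Sum.inl i) / (1 + g (Sum.inl i)) = y (Sum.inl i)) ∧
      g (Sum.inr ()) * (1 + y (Sum.inr ())) / (1 + g (Sum.inr ())) = y (Sum.inr ())) ↔
    (Bw - Matrix.diagonal dv - Xmat y * Bw).mulVec y = 0 := by
  have hdv0 i : dv i ≠ 0 := (hdv i).ne'
  have hBy i : (Bw *ᵥ y) i = dv i * g i := by
    rw [hg, inv_diagonal_mul_mulVec hdv0, mul_div_cancel₀ _ (hdv0 i)]
  have hg1 i : 1 + g i ≠ 0 := by
    rw [hg, inv_diagonal_mul_mulVec hdv0]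
    exact (add_pos_of_pos_of_nonneg one_pos
      (div_nonneg (mulVec_nonneg_s11 hBw hy i) (hdv i).le)).ne'
  have hequil i : ((Bw - diagonal dv - Xmat y * Bw) *ᵥ y) i
      = dv i * (g i - y i - Sum.elim (fun j => y (Sum.inl j)) (fun _ => 0) i * g i) := by
    unfold Xmat
    rw [sub_diagonal_sub_diagonal_mul_mulVec, hBy]
    ring
  simp only [funext_iff, Sum.forall, Unique.forall_iff, Pi.zero_apply, hequil, mul_eq_zero, hdv0,
    false_or, Sum.elim_inl, Sum.elim_inr, zero_mul, sub_eq_zero,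
    div_one_add_eq_iff (hg1 _), mul_one_add_div_one_add_eq_iff (hg1 _)]
end

section
/- If B_w is an irreducible nonnegative matrix, D_w a positive diagonal matrix, and s(B_w − D_w) > 0, then the single-virus SIWS system has at most one equilibrium ỹ with 0 ≪ ỹ ≪ 1: any two such equilibria coincide. -/
open Matrix

/-!
Let `κ = maxᵢ yᵢ / y'ᵢ`, attained at `m`, so `y ≤ κ y'` and `y_m = κ y'_m`; by symmetry it
suffices to rule out `κ > 1`. At a population node `m` the equilibrium equation gives
`δ y = (1 - y) (B y) ≤ (1 - y) κ (B y') < (1 - y') κ (B y') = κ δ y' = δ y`, because `y_m > y'_m`.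
At the resource the equation has no factor `1 - y`, so `(B y)_m = κ (B y')_m`; as `B ≥ 0` and
`y ≤ κ y'`, this forces `yⱼ = κ y'ⱼ` wherever `B_{mj} ≠ 0`, and such a population node `j` exists
because the contamination weights `cⱼ` sum to one.
-/

namespace Matrix

variable {ι R : Type*} [Fintype ι] [Semiring R] [PartialOrder R] {A : Matrix ι ι R}

lemma mulVec_apply_mono [IsOrderedRing R] (hA : ∀ i j, 0 ≤ A i j) {u v : ι → R} (huv : u ≤ v)
    (i : ι) : (A *ᵥ u) i ≤ (A *ᵥ v) i :=
  dotProduct_le_dotProduct_of_nonneg_left huv (hA i)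

lemma apply_eq_of_mulVec_apply_eq [IsOrderedCancelAddMonoid R] [PosMulMono R]
    [IsLeftCancelMulZero R]
    (hA : ∀ i j, 0 ≤ A i j) {u v : ι → R} (huv : u ≤ v) {i : ι}
    (h : (A *ᵥ u) i = (A *ᵥ v) i) {j : ι} (hij : A i j ≠ 0) : u j = v j := by
  have hle : ∀ k ∈ Finset.univ, A i k * u k ≤ A i k * v k := fun k _ =>
    mul_le_mul_of_nonneg_left (huv k) (hA i k)
  exact mul_left_cancel₀ hij <| (Finset.sum_eq_sum_iff_of_le hle).1 h j (Finset.mem_univ j)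

end Matrix

lemma exists_le_smul_and_apply_eq {ι : Type*} [Fintype ι] [Nonempty ι] (u v : ι → ℝ)
    (hv : ∀ i, 0 < v i) : ∃ κ : ℝ, ∃ m, u ≤ κ • v ∧ u m = κ * v m := by
  obtain ⟨m, -, hm⟩ := Finset.exists_max_image Finset.univ (fun j => u j / v j)
    Finset.univ_nonempty
  refine ⟨u m / v m, m, fun j => ?_, (div_mul_cancel₀ _ (hv m).ne').symm⟩
  exact (div_le_iff₀ (hv j)).1 (hm j (Finset.mem_univ j))

section SIWS

variable {n : ℕ} {Bw : Matrix (Idx n) (Idx n) ℝ} {dv : Idx n → ℝ} {y y' : Idx n → ℝ}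

lemma equilibrium_apply (heq : (-(diagonal dv) + (1 - Xmat y) * Bw) *ᵥ y = 0) (i : Idx n) :
    dv i * y i = (1 - Sum.elim (fun k => y (.inl k)) (fun _ => 0) i) * (Bw *ᵥ y) i := by
  have h := congrFun heq i
  rw [add_mulVec, neg_mulVec, ← mulVec_mulVec] at h
  simp only [Xmat, ← diagonal_one (n := Idx n) (α := ℝ), diagonal_sub, mulVec_diagonal,
    Pi.add_apply, Pi.neg_apply, Pi.zero_apply] at h
  linarith

lemma equilibrium_apply_inl (heq : (-(diagonal dv) + (1 - Xmat y) * Bw) *ᵥ y = 0) (k : Fin n) :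
    dv (.inl k) * y (.inl k) = (1 - y (.inl k)) * (Bw *ᵥ y) (.inl k) :=
  equilibrium_apply heq (.inl k)

lemma equilibrium_apply_inr (heq : (-(diagonal dv) + (1 - Xmat y) * Bw) *ᵥ y = 0) :
    dv (.inr ()) * y (.inr ()) = (Bw *ᵥ y) (.inr ()) := by
  simpa using equilibrium_apply heq (.inr ())

lemma mulVec_pos_of_equilibrium (hdv : ∀ i, 0 < dv i) (hy : ∀ i, 0 < y i ∧ y i < 1)
    (heq : (-(diagonal dv) + (1 - Xmat y) * Bw) *ᵥ y = 0) (i : Idx n) : 0 < (Bw *ᵥ y) i := by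
  have hdy : 0 < dv i * y i := mul_pos (hdv i) (hy i).1
  rcases i with k | ⟨⟩
  · rw [equilibrium_apply_inl heq k] at hdy
    exact pos_of_mul_pos_right hdy (by linarith [(hy (.inl k)).2])
  · rwa [equilibrium_apply_inr heq] at hdy

lemma exists_resource_row_ne_zero
    (hcsum : ∑ i : Fin n, ((diagonal dv)⁻¹ * Bw) (.inr ()) (.inl i) = 1) :
    ∃ k, Bw (.inr ()) (.inl k) ≠ 0 := by
  by_contra! h
  simp [inv_diagonal, diagonal_mul, h] at hcsum

variable {κ : ℝ}

lemma apply_inl_ne_smul (hBw : ∀ i j, 0 ≤ Bw i j) (hdv : ∀ i, 0 < dv i)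
    (hy : ∀ i, 0 < y i ∧ y i < 1) (hy' : ∀ i, 0 < y' i ∧ y' i < 1)
    (heq : (-(diagonal dv) + (1 - Xmat y) * Bw) *ᵥ y = 0)
    (heq' : (-(diagonal dv) + (1 - Xmat y') * Bw) *ᵥ y' = 0)
    (hle : y ≤ κ • y') (hκ : 1 < κ) (k : Fin n) : y (.inl k) ≠ κ * y' (.inl k) := by
  intro hk
  have hBy' := mulVec_pos_of_equilibrium hdv hy' heq' (.inl k)
  have hlt : y' (.inl k) < y (.inl k) := by nlinarith [(hy' (.inl k)).1]
  have hBy : (Bw *ᵥ y) (.inl k) ≤ κ * (Bw *ᵥ y') (.inl k) := by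
    simpa [mulVec_smul] using mulVec_apply_mono hBw hle (.inl k)
  refine lt_irrefl (dv (.inl k) * y (.inl k)) ?_
  calc dv (.inl k) * y (.inl k)
      = (1 - y (.inl k)) * (Bw *ᵥ y) (.inl k) := equilibrium_apply_inl heq k
    _ ≤ (1 - y (.inl k)) * (κ * (Bw *ᵥ y') (.inl k)) :=
        mul_le_mul_of_nonneg_left hBy (by linarith [(hy (.inl k)).2])
    _ < (1 - y' (.inl k)) * (κ * (Bw *ᵥ y') (.inl k)) :=
        mul_lt_mul_of_pos_right (by linarith) (by positivity)
    _ = κ * (dv (.inl k) * y' (.inl k)) := by rw [equilibrium_apply_inl heq' k]; ring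
    _ = dv (.inl k) * y (.inl k) := by rw [hk]; ring

lemma exists_apply_inl_eq_smul (hBw : ∀ i j, 0 ≤ Bw i j)
    (heq : (-(diagonal dv) + (1 - Xmat y) * Bw) *ᵥ y = 0)
    (heq' : (-(diagonal dv) + (1 - Xmat y') * Bw) *ᵥ y' = 0) (hle : y ≤ κ • y')
    (hres : ∃ k, Bw (.inr ()) (.inl k) ≠ 0)
    (hm : y (.inr ()) = κ * y' (.inr ())) : ∃ k, y (.inl k) = κ * y' (.inl k) := by
  obtain ⟨k, hk⟩ := hres
  have hrow : (Bw *ᵥ y) (.inr ()) = (Bw *ᵥ (κ • y')) (.inr ()) := by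
    rw [mulVec_smul, Pi.smul_apply, smul_eq_mul, ← equilibrium_apply_inr heq,
      ← equilibrium_apply_inr heq', hm]
    ring
  exact ⟨k, apply_eq_of_mulVec_apply_eq hBw hle hrow hk⟩

lemma le_of_equilibrium (hBw : ∀ i j, 0 ≤ Bw i j) (hdv : ∀ i, 0 < dv i)
    (hres : ∃ k, Bw (.inr ()) (.inl k) ≠ 0)
    (hy : ∀ i, 0 < y i ∧ y i < 1) (hy' : ∀ i, 0 < y' i ∧ y' i < 1)
    (heq : (-(diagonal dv) + (1 - Xmat y) * Bw) *ᵥ y = 0)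
    (heq' : (-(diagonal dv) + (1 - Xmat y') * Bw) *ᵥ y' = 0) : y ≤ y' := by
  by_contra hnot
  simp only [Pi.le_def, not_forall, not_le] at hnot
  obtain ⟨i, hi⟩ := hnot
  obtain ⟨κ, m, hle, hm⟩ := exists_le_smul_and_apply_eq y y' fun i => (hy' i).1
  have hκ : 1 < κ := by
    have := hle i
    simp only [Pi.smul_apply, smul_eq_mul] at this
    nlinarith [(hy' i).1]
  rcases m with k | ⟨⟩
  · exact apply_inl_ne_smul hBw hdv hy hy' heq heq' hle hκ k hm
  · obtain ⟨k, hk⟩ := exists_apply_inl_eq_smul hBw heq heq' hle hres hm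
    exact apply_inl_ne_smul hBw hdv hy hy' heq heq' hle hκ k hk

end SIWS

theorem siws_endemic_unique_general {n : ℕ}
    (Bw : Matrix (Idx n) (Idx n) ℝ) (hBw : ∀ i j, 0 ≤ Bw i j)
    (dv : Idx n → ℝ) (hdv : ∀ i, 0 < dv i)
    (hcsum : ∑ i : Fin n, ((Matrix.diagonal dv)⁻¹ * Bw) (Sum.inr ()) (Sum.inl i) = 1)
    (y y' : Idx n → ℝ)
    (hy : ∀ i, 0 < y i ∧ y i < 1) (hy' : ∀ i, 0 < y' i ∧ y' i < 1)
    (heq : (-(Matrix.diagonal dv) + (1 - Xmat y) * Bw).mulVec y = 0)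
    (heq' : (-(Matrix.diagonal dv) + (1 - Xmat y') * Bw).mulVec y' = 0) :
    y = y' := by
  have hres := exists_resource_row_ne_zero hcsum
  exact le_antisymm (le_of_equilibrium hBw hdv hres hy hy' heq heq')
    (le_of_equilibrium hBw hdv hres hy' hy heq' heq)

/-- Uniqueness of the strictly interior endemic equilibrium of the single-virus SIWS
system. The last row of D_w⁻¹B_w is the contamination vector c, with cᵢ ≥ 0 summing
to 1 and vanishing last entry. -/
theorem siws_endemic_unique {n : ℕ}
    (Bw : Matrix (Idx n) (Idx n) ℝ) (hBw : ∀ i j, 0 ≤ Bw i j) (hirr : Irred Bw)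
    (dv : Idx n → ℝ) (hdv : ∀ i, 0 < dv i)
    (hs : 0 < spectralAbscissa (Bw - Matrix.diagonal dv))
    (hlast : Bw (Sum.inr ()) (Sum.inr ()) = 0)
    (hcsum : ∑ i : Fin n, ((Matrix.diagonal dv)⁻¹ * Bw) (Sum.inr ()) (Sum.inl i) = 1)
    (y y' : Idx n → ℝ)
    (hy : ∀ i, 0 < y i ∧ y i < 1) (hy' : ∀ i, 0 < y' i ∧ y' i < 1)
    (heq : (-(Matrix.diagonal dv) + (1 - Xmat y) * Bw).mulVec y = 0)
    (heq' : (-(Matrix.diagonal dv) + (1 - Xmat y') * Bw).mulVec y' = 0) :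
    y = y' :=
  siws_endemic_unique_general Bw hBw dv hdv hcsum y y' hy hy' heq heq'
end

section
/- In the bi-virus SIWS model with B_w¹, B_w² irreducible, s(B_w¹ − D_w¹) > 0, s(B_w² − D_w²) > 0, and (D_w¹)⁻¹B_w¹ > (D_w²)⁻¹B_w² entrywise (with inequality strict in at least one entry), the single-virus endemic equilibria satisfy ỹ¹ > ỹ² (componentwise ≥ with at least one strict inequality). -/
/-!
Write `A = (D_w)⁻¹ B_w`. An equilibrium solves `yᵢ = (1 - yᵢ) (A y)ᵢ` at the nodes and
`y_w = (A y)_w` at the resource. Let `κ = maxᵢ y²ᵢ / y¹ᵢ` over the nodes. The resource rows of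
`A¹` and `A²` have the same sum and `A² ≤ A¹`, so they agree, and `κ` bounds the resource ratio
as well. At a maximising node `(A² y²)ᵢ ≤ κ (A¹ y¹)ᵢ`, and since `t ↦ t / (1 - t)` grows faster
than linearly on `(0, 1)` this forces `κ ≤ 1`. If the two equilibria coincided, `A¹ y = A² y`
with `y ≫ 0` and `A² ≤ A¹` would force `A¹ = A²`.
-/

open Matrix

section

variable {ι : Type*} [Fintype ι]

lemma inv_diagonal_mul_apply [DecidableEq ι] {K : Type*} [Field K] {d : ι → K}
    (hd : ∀ i, d i ≠ 0) (B : Matrix ι ι K) (i j : ι) :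
    ((diagonal d)⁻¹ * B) i j = (d i)⁻¹ * B i j := by
  have hinv : (diagonal d)⁻¹ = diagonal d⁻¹ :=
    inv_eq_left_inv <| by
      rw [diagonal_mul_diagonal, ← diagonal_one]
      exact congrArg diagonal (funext fun i => inv_mul_cancel₀ (hd i))
  rw [hinv, diagonal_mul, Pi.inv_apply]

lemma mulVec_apply_le_mulVec_apply {A B : Matrix ι ι ℝ} {x y : ι → ℝ} {i : ι}
    (hA : ∀ j, 0 ≤ A i j) (hAB : ∀ j, A i j ≤ B i j) (hx : ∀ j, 0 ≤ x j)
    (hxy : ∀ j, x j ≤ y j) : (A *ᵥ x) i ≤ (B *ᵥ y) i :=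
  Finset.sum_le_sum fun j _ =>
    calc A i j * x j ≤ A i j * y j := mul_le_mul_of_nonneg_left (hxy j) (hA j)
      _ ≤ B i j * y j := mul_le_mul_of_nonneg_right (hAB j) ((hx j).trans (hxy j))

lemma eq_of_mulVec_eq_of_le {A B : Matrix ι ι ℝ} {y : ι → ℝ} (hAB : ∀ i j, A i j ≤ B i j)
    (hy : ∀ j, 0 < y j) (h : A *ᵥ y = B *ᵥ y) : A = B := by
  ext i j
  have hrow := (Finset.sum_eq_sum_iff_of_le fun j _ =>
    mul_le_mul_of_nonneg_right (hAB i j) (hy j).le).1 (congrFun h i) j (Finset.mem_univ j)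
  exact mul_right_cancel₀ (hy j).ne' hrow

end

lemma le_one_of_one_sub_mul_eq {a κ s t : ℝ} (ha : 0 < a) (hκa : κ * a < 1)
    (hs : (1 - a) * s = a) (ht : (1 - κ * a) * t = κ * a) (hts : t ≤ κ * s) : κ ≤ 1 := by
  by_contra! hκ
  have ha1 : a < 1 := by nlinarith
  have hs0 : 0 < s := by nlinarith
  have ha_le : a ≤ (1 - κ * a) * s := by nlinarith
  nlinarith [mul_pos (mul_pos (sub_pos.2 hκ) ha) hs0]

section SIWS

open Sum

variable {n : ℕ} {A A₁ A₂ : Matrix (Idx n) (Idx n) ℝ} {y y₁ y₂ : Idx n → ℝ}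

lemma one_sub_Xmat (y : Idx n → ℝ) :
    1 - Xmat y = diagonal (Sum.elim (fun i => 1 - y (inl i)) 1) := by
  rw [Xmat, ← diagonal_one, diagonal_sub]
  congr
  ext (i | i) <;> simp

lemma Xmat_fixedPoint_apply (heq : ((1 - Xmat y) * A) *ᵥ y = y) (i : Idx n) :
    Sum.elim (fun i => 1 - y (inl i)) 1 i * (A *ᵥ y) i = y i := by
  rw [← mulVec_mulVec, one_sub_Xmat] at heq
  simpa only [mulVec_diagonal] using congrFun heq i

lemma Xmat_fixedPoint_inl (heq : ((1 - Xmat y) * A) *ᵥ y = y) (i : Fin n) :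
    (1 - y (inl i)) * (A *ᵥ y) (inl i) = y (inl i) :=
  Xmat_fixedPoint_apply heq (inl i)

lemma Xmat_fixedPoint_inr (heq : ((1 - Xmat y) * A) *ᵥ y = y) :
    (A *ᵥ y) (inr ()) = y (inr ()) := by
  simpa using Xmat_fixedPoint_apply heq (inr ())

lemma mulVec_inr_eq_sum (hA : A (inr ()) (inr ()) = 0) (v : Idx n → ℝ) :
    (A *ᵥ v) (inr ()) = ∑ i, A (inr ()) (inl i) * v (inl i) := by
  simp [mulVec, dotProduct, Fintype.sum_sum_type, hA]

lemma mulVec_eq_of_Xmat_fixedPoint (hy : ∀ i, y (inl i) < 1)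
    (heq₁ : ((1 - Xmat y) * A₁) *ᵥ y = y) (heq₂ : ((1 - Xmat y) * A₂) *ᵥ y = y) :
    A₁ *ᵥ y = A₂ *ᵥ y := by
  ext i
  have hpos : Sum.elim (fun i => 1 - y (inl i)) 1 i ≠ 0 := by
    rcases i with i | i
    · exact (sub_pos.2 (hy i)).ne'
    · exact one_ne_zero
  exact mul_left_cancel₀ hpos
    ((Xmat_fixedPoint_apply heq₁ i).trans (Xmat_fixedPoint_apply heq₂ i).symm)

lemma Xmat_fixedPoint_inr_le_mul (hcorner₁ : A₁ (inr ()) (inr ()) = 0)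
    (hcorner₂ : A₂ (inr ()) (inr ()) = 0) (hrow : ∀ i, A₂ (inr ()) (inl i) = A₁ (inr ()) (inl i))
    (hrow_nonneg : ∀ i, 0 ≤ A₁ (inr ()) (inl i)) {κ : ℝ}
    (hbound : ∀ i, y₂ (inl i) ≤ κ * y₁ (inl i))
    (heq₁ : ((1 - Xmat y₁) * A₁) *ᵥ y₁ = y₁) (heq₂ : ((1 - Xmat y₂) * A₂) *ᵥ y₂ = y₂) :
    y₂ (inr ()) ≤ κ * y₁ (inr ()) :=
  calc y₂ (inr ()) = ∑ i, A₁ (inr ()) (inl i) * y₂ (inl i) := by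
        rw [← Xmat_fixedPoint_inr heq₂, mulVec_inr_eq_sum hcorner₂]
        simp only [hrow]
    _ ≤ ∑ i, A₁ (inr ()) (inl i) * (κ * y₁ (inl i)) :=
        Finset.sum_le_sum fun i _ => mul_le_mul_of_nonneg_left (hbound i) (hrow_nonneg i)
    _ = κ * y₁ (inr ()) := by
        rw [← Xmat_fixedPoint_inr heq₁, mulVec_inr_eq_sum hcorner₁, Finset.mul_sum]
        exact Finset.sum_congr rfl fun i _ => mul_left_comm _ _ _

theorem Xmat_fixedPoint_le [Nonempty (Fin n)] (hA₂ : ∀ i j, 0 ≤ A₂ i j)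
    (hle : ∀ i j, A₂ i j ≤ A₁ i j) (hcorner₁ : A₁ (inr ()) (inr ()) = 0)
    (hcorner₂ : A₂ (inr ()) (inr ()) = 0) (hrow : ∀ i, A₂ (inr ()) (inl i) = A₁ (inr ()) (inl i))
    (hy₁ : ∀ i, 0 < y₁ i ∧ y₁ i < 1) (hy₂ : ∀ i, 0 < y₂ i ∧ y₂ i < 1)
    (heq₁ : ((1 - Xmat y₁) * A₁) *ᵥ y₁ = y₁) (heq₂ : ((1 - Xmat y₂) * A₂) *ᵥ y₂ = y₂) (i : Idx n) :
    y₂ i ≤ y₁ i := by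
  obtain ⟨m, hm⟩ := Finite.exists_max fun i : Fin n => y₂ (inl i) / y₁ (inl i)
  set κ := y₂ (inl m) / y₁ (inl m)
  have hκ : 0 < κ := div_pos (hy₂ _).1 (hy₁ _).1
  have hm_eq : y₂ (inl m) = κ * y₁ (inl m) := (div_mul_cancel₀ _ (hy₁ _).1.ne').symm
  have hbound_inl (i : Fin n) : y₂ (inl i) ≤ κ * y₁ (inl i) :=
    (div_le_iff₀ (hy₁ _).1).1 (hm i)
  have hbound : ∀ j, y₂ j ≤ κ * y₁ j
    | inl i => hbound_inl i
    | inr () => Xmat_fixedPoint_inr_le_mul hcorner₁ hcorner₂ hrow (fun i => hrow i ▸ hA₂ _ _)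
        hbound_inl heq₁ heq₂
  have hκ_le : κ ≤ 1 := by
    refine le_one_of_one_sub_mul_eq (hy₁ (inl m)).1 (hm_eq ▸ (hy₂ (inl m)).2)
      (Xmat_fixedPoint_inl heq₁ m) (hm_eq ▸ Xmat_fixedPoint_inl heq₂ m) ?_
    rw [← smul_eq_mul, ← Pi.smul_apply κ, ← mulVec_smul]
    exact mulVec_apply_le_mulVec_apply (hA₂ _) (hle _) (fun j => (hy₂ j).1.le) hbound
  calc y₂ i ≤ κ * y₁ i := hbound i
    _ ≤ y₁ i := mul_le_of_le_one_left (hy₁ i).1.le hκ_le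

end SIWS

theorem siws_endemic_dominance_general {n : ℕ}
    (Bw1 Bw2 : Matrix (Idx n) (Idx n) ℝ)
    (hBw2 : ∀ i j, 0 ≤ Bw2 i j)
    (dv1 dv2 : Idx n → ℝ) (hdv1 : ∀ i, 0 < dv1 i) (hdv2 : ∀ i, 0 < dv2 i)
    (hord : ∀ i j, ((Matrix.diagonal dv2)⁻¹ * Bw2) i j ≤ ((Matrix.diagonal dv1)⁻¹ * Bw1) i j)
    (hne : (Matrix.diagonal dv1)⁻¹ * Bw1 ≠ (Matrix.diagonal dv2)⁻¹ * Bw2)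
    (hlast1 : Bw1 (Sum.inr ()) (Sum.inr ()) = 0)
    (hlast2 : Bw2 (Sum.inr ()) (Sum.inr ()) = 0)
    (hcsum1 : ∑ i : Fin n, ((Matrix.diagonal dv1)⁻¹ * Bw1) (Sum.inr ()) (Sum.inl i) = 1)
    (hcsum2 : ∑ i : Fin n, ((Matrix.diagonal dv2)⁻¹ * Bw2) (Sum.inr ()) (Sum.inl i) = 1)
    (ty1 ty2 : Idx n → ℝ)
    (hty1 : ∀ i, 0 < ty1 i ∧ ty1 i < 1) (hty2 : ∀ i, 0 < ty2 i ∧ ty2 i < 1)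
    (heq1 : ((1 - Xmat ty1) * ((Matrix.diagonal dv1)⁻¹ * Bw1)).mulVec ty1 = ty1)
    (heq2 : ((1 - Xmat ty2) * ((Matrix.diagonal dv2)⁻¹ * Bw2)).mulVec ty2 = ty2) :
    (∀ i, ty2 i ≤ ty1 i) ∧ ty1 ≠ ty2 := by
  have hentry₁ := inv_diagonal_mul_apply (fun i => (hdv1 i).ne') Bw1
  have hentry₂ := inv_diagonal_mul_apply (fun i => (hdv2 i).ne') Bw2
  have hnonneg₂ (i j) : 0 ≤ ((diagonal dv2)⁻¹ * Bw2) i j :=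
    hentry₂ i j ▸ mul_nonneg (inv_nonneg.2 (hdv2 i).le) (hBw2 i j)
  have hrow := (Finset.sum_eq_sum_iff_of_le fun i _ => hord (Sum.inr ()) (Sum.inl i)).1
    (hcsum2.trans hcsum1.symm)
  have : Nonempty (Fin n) := by
    by_contra h
    simp [not_nonempty_iff.1 h] at hcsum1
  refine ⟨Xmat_fixedPoint_le hnonneg₂ hord (by rw [hentry₁, hlast1, mul_zero])
    (by rw [hentry₂, hlast2, mul_zero]) (fun i => hrow i (Finset.mem_univ i)) hty1 hty2 heq1 heq2,
    fun h => hne ?_⟩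
  subst h
  exact (eq_of_mulVec_eq_of_le hord (fun j => (hty1 j).1)
    (mulVec_eq_of_Xmat_fixedPoint (fun i => (hty1 _).2) heq2 heq1)).symm

/-- If virus 1 dominates virus 2, i.e. (D_w¹)⁻¹B_w¹ > (D_w²)⁻¹B_w² entrywise (strict in
some entry), then the single-virus endemic equilibria satisfy ỹ¹ > ỹ². -/
theorem siws_endemic_dominance {n : ℕ}
    (Bw1 Bw2 : Matrix (Idx n) (Idx n) ℝ)
    (hBw1 : ∀ i j, 0 ≤ Bw1 i j) (hBw2 : ∀ i j, 0 ≤ Bw2 i j)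
    (hirr1 : Irred Bw1) (hirr2 : Irred Bw2)
    (dv1 dv2 : Idx n → ℝ) (hdv1 : ∀ i, 0 < dv1 i) (hdv2 : ∀ i, 0 < dv2 i)
    (hs1 : 0 < spectralAbscissa (Bw1 - Matrix.diagonal dv1))
    (hs2 : 0 < spectralAbscissa (Bw2 - Matrix.diagonal dv2))
    (hord : ∀ i j, ((Matrix.diagonal dv2)⁻¹ * Bw2) i j ≤ ((Matrix.diagonal dv1)⁻¹ * Bw1) i j)
    (hne : (Matrix.diagonal dv1)⁻¹ * Bw1 ≠ (Matrix.diagonal dv2)⁻¹ * Bw2)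
    (hlast1 : Bw1 (Sum.inr ()) (Sum.inr ()) = 0)
    (hlast2 : Bw2 (Sum.inr ()) (Sum.inr ()) = 0)
    (hcsum1 : ∑ i : Fin n, ((Matrix.diagonal dv1)⁻¹ * Bw1) (Sum.inr ()) (Sum.inl i) = 1)
    (hcsum2 : ∑ i : Fin n, ((Matrix.diagonal dv2)⁻¹ * Bw2) (Sum.inr ()) (Sum.inl i) = 1)
    (ty1 ty2 : Idx n → ℝ)
    (hty1 : ∀ i, 0 < ty1 i ∧ ty1 i < 1) (hty2 : ∀ i, 0 < ty2 i ∧ ty2 i < 1)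
    (heq1 : ((1 - Xmat ty1) * ((Matrix.diagonal dv1)⁻¹ * Bw1)).mulVec ty1 = ty1)
    (heq2 : ((1 - Xmat ty2) * ((Matrix.diagonal dv2)⁻¹ * Bw2)).mulVec ty2 = ty2) :
    (∀ i, ty2 i ≤ ty1 i) ∧ ty1 ≠ ty2 :=
  siws_endemic_dominance_general Bw1 Bw2 hBw2 dv1 dv2 hdv1 hdv2 hord hne hlast1 hlast2 hcsum1 hcsum2
    ty1 ty2 hty1 hty2 heq1 heq2
end
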